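/- For each n ≥ 11 there exists a graph on n vertices in which exactly n-1 vertices have strictly positive leverage centrality: take vertices v_1,...,v_n with edges {v_i v_j : 1 ≤ i < j ≤ n-4} ∪ {v_i v_j : 1 ≤ i ≤ n-4, n-3 ≤ j ≤ n-1} ∪ {v_i v_n : n-3 ≤ i ≤ n-1}. In this graph, l(v_i) > 0 for 1 ≤ i ≤ n-1. -/

import Mathlib

open SimpleGraph Finset

/-- Degree of a vertex (classical decidability so arbitrary graphs work). -/
noncomputable def deg {V : Type*} [Fintype V] (G : SimpleGraph V) (v : V) : ℕ :=
  letI : DecidableRel G.Adj := Classical.decRel _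
  G.degree v

/-- Neighbor finset of a vertex. -/
noncomputable def nbrs {V : Type*} [Fintype V] (G : SimpleGraph V) (v : V) : Finset V :=
  letI : DecidableRel G.Adj := Classical.decRel _
  G.neighborFinset v

/-- Leverage centrality of a vertex. -/
noncomputable def lev {V : Type*} [Fintype V] (G : SimpleGraph V) (v : V) : ℚ :=
  (1 / (deg G v : ℚ)) *
    ∑ u ∈ nbrs G v, ((deg G v : ℚ) - (deg G u : ℚ)) / ((deg G v : ℚ) + (deg G u : ℚ))

/-!
A clique vertex has degree `n - 2` and its neighbours have degree `n - 2` or `n - 3`, so every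
term of its leverage sum is nonnegative and the terms at the three middle vertices are positive.
A middle vertex has degree `n - 3`, with `n - 4` clique neighbours of degree `n - 2` and the apex
of degree `3`, so its leverage is `((n - 6) / n - (n - 4) / (2n - 5)) / (n - 3)`, which
simplifies to `(n - 10) / (n (2n - 5))`.
-/

section Leverage

variable {V : Type*} [Fintype V] {G : SimpleGraph V} {u v : V}

theorem mem_nbrs : u ∈ nbrs G v ↔ G.Adj v u := by
  simp [nbrs]

theorem deg_eq_card_nbrs : deg G v = #(nbrs G v) :=
  rfl

theorem lev_pos_of_forall_deg_le (hle : ∀ u ∈ nbrs G v, deg G u ≤ deg G v)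
    (hlt : ∃ u ∈ nbrs G v, deg G u < deg G v) : 0 < lev G v := by
  obtain ⟨w, hw, hw_lt⟩ := hlt
  have hv : (0 : ℚ) < deg G v := by exact_mod_cast Nat.zero_lt_of_lt hw_lt
  refine mul_pos (by positivity) (sum_pos' (fun u hu => ?_) ⟨w, hw, ?_⟩)
  · have : (deg G u : ℚ) ≤ deg G v := by exact_mod_cast hle u hu
    exact div_nonneg (by linarith) (by positivity)
  · have : (deg G w : ℚ) < deg G v := by exact_mod_cast hw_lt
    exact div_pos (by linarith) (by positivity)

theorem lev_eq_of_nbrs_eq_insert [DecidableEq V] {w : V} {s : Finset V} {d : ℕ}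
    (hv : nbrs G v = insert w s) (hw : w ∉ s) (hs : ∀ u ∈ s, deg G u = d) :
    lev G v = 1 / deg G v * ((deg G v - deg G w) / (deg G v + deg G w) +
      #s * ((deg G v - d) / (deg G v + d))) := by
  rw [lev, hv, sum_insert hw, sum_congr rfl fun u hu => by rw [hs u hu], sum_const, nsmul_eq_mul]

end Leverage

/-- Vertex `i : Fin n` is the paper's `v_{i+1}`: a clique on `{0, …, n-5}`, the three vertices
`n-4, n-3, n-2` joined to all of it, and `n-1` joined to these three. -/
def leverageExample (n : ℕ) : SimpleGraph (Fin n) :=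
  SimpleGraph.fromRel fun a b =>
    (a : ℕ) < n - 4 ∧ (b : ℕ) < n - 1 ∨
      n - 4 ≤ (a : ℕ) ∧ (a : ℕ) < n - 1 ∧ (b : ℕ) = n - 1

namespace leverageExample

variable {n : ℕ} {v w : Fin n}

theorem nbrs_of_lt (hv : (v : ℕ) < n - 4) :
    nbrs (leverageExample n) v = ({u | (u : ℕ) < n - 1} : Finset (Fin n)).erase v := by
  ext u
  simp only [mem_nbrs, leverageExample, fromRel_adj, mem_erase, mem_filter_univ, ne_eq,
    Fin.ext_iff]
  omega

theorem nbrs_of_le_of_lt (hv₁ : n - 4 ≤ (v : ℕ)) (hv₂ : (v : ℕ) < n - 1)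
    (hw : (w : ℕ) = n - 1) :
    nbrs (leverageExample n) v = insert w ({u | (u : ℕ) < n - 4} : Finset (Fin n)) := by
  ext u
  simp only [mem_nbrs, leverageExample, fromRel_adj, mem_insert, mem_filter_univ, ne_eq,
    Fin.ext_iff]
  omega

theorem nbrs_of_eq (hw : (w : ℕ) = n - 1) :
    nbrs (leverageExample n) w =
      ({u | (u : ℕ) < n - 1} : Finset (Fin n)) \ ({u | (u : ℕ) < n - 4} : Finset (Fin n)) := by
  ext u
  simp only [mem_nbrs, leverageExample, fromRel_adj, mem_sdiff, mem_filter_univ, ne_eq,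
    Fin.ext_iff]
  omega

theorem deg_of_lt (hv : (v : ℕ) < n - 4) : deg (leverageExample n) v = n - 2 := by
  rw [deg_eq_card_nbrs, nbrs_of_lt hv, card_erase_of_mem (by simp only [mem_filter_univ]; omega),
    Fin.card_filter_val_lt]
  omega

theorem deg_of_le_of_lt (hn : 4 ≤ n) (hv₁ : n - 4 ≤ (v : ℕ)) (hv₂ : (v : ℕ) < n - 1)
    (hw : (w : ℕ) = n - 1) : deg (leverageExample n) v = n - 3 := by
  rw [deg_eq_card_nbrs, nbrs_of_le_of_lt hv₁ hv₂ hw,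
    card_insert_of_notMem (by simp only [mem_filter_univ]; omega),
    Fin.card_filter_val_lt]
  omega

theorem deg_of_eq (hn : 4 ≤ n) (hw : (w : ℕ) = n - 1) : deg (leverageExample n) w = 3 := by
  rw [deg_eq_card_nbrs, nbrs_of_eq hw,
    card_sdiff_of_subset fun u hu => by simp only [mem_filter_univ] at hu ⊢; omega,
    Fin.card_filter_val_lt, Fin.card_filter_val_lt]
  omega

theorem lev_pos_of_lt (hv : (v : ℕ) < n - 4) : 0 < lev (leverageExample n) v := by
  obtain ⟨w, hw⟩ : ∃ w : Fin n, (w : ℕ) = n - 1 := ⟨⟨n - 1, by omega⟩, rfl⟩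
  obtain ⟨a, ha⟩ : ∃ a : Fin n, (a : ℕ) = n - 4 := ⟨⟨n - 4, by omega⟩, rfl⟩
  refine lev_pos_of_forall_deg_le (fun u hu => ?_) ⟨a, ?_, ?_⟩
  · rw [nbrs_of_lt hv] at hu
    simp only [mem_erase, mem_filter_univ] at hu
    rcases lt_or_ge (u : ℕ) (n - 4) with hu' | hu'
    · rw [deg_of_lt hu', deg_of_lt hv]
    · rw [deg_of_le_of_lt (by omega) hu' hu.2 hw, deg_of_lt hv]
      omega
  · simp only [nbrs_of_lt hv, mem_erase, mem_filter_univ, ne_eq, Fin.ext_iff]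
    omega
  · rw [deg_of_le_of_lt (by omega) ha.ge (by omega) hw, deg_of_lt hv]
    omega

theorem lev_of_le_of_lt (hn : 4 ≤ n) (hv₁ : n - 4 ≤ (v : ℕ)) (hv₂ : (v : ℕ) < n - 1) :
    lev (leverageExample n) v = (n - 10) / (n * (2 * n - 5)) := by
  obtain ⟨w, hw⟩ : ∃ w : Fin n, (w : ℕ) = n - 1 := ⟨⟨n - 1, by omega⟩, rfl⟩
  rw [lev_eq_of_nbrs_eq_insert (nbrs_of_le_of_lt hv₁ hv₂ hw)
    (by simp only [mem_filter_univ]; omega)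
    (fun u hu => deg_of_lt (by simpa using hu)), deg_of_le_of_lt hn hv₁ hv₂ hw, deg_of_eq hn hw,
    Fin.card_filter_val_lt, min_eq_right (by omega)]
  have hn' : (4 : ℚ) ≤ n := by exact_mod_cast hn
  push_cast [Nat.cast_sub (by omega : 2 ≤ n), Nat.cast_sub (by omega : 3 ≤ n), Nat.cast_sub hn]
  have h₀ : (n : ℚ) ≠ 0 := by linarith
  have h₃ : (n : ℚ) - 3 ≠ 0 := by linarith
  have h₅ : (n : ℚ) * 2 - 5 ≠ 0 := by linarith
  rw [sub_add_cancel, show (n : ℚ) - 3 + (n - 2) = 2 * n - 5 by ring]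
  field_simp
  ring

end leverageExample

theorem exists_graph_n_sub_one_positive (n : ℕ) (hn : 11 ≤ n)
    (G : SimpleGraph (Fin n))
    (hG : ∀ a b : Fin n, G.Adj a b ↔ a ≠ b ∧
      (((a : ℕ) < n - 4 ∧ (b : ℕ) < n - 4) ∨
       ((a : ℕ) < n - 4 ∧ n - 4 ≤ (b : ℕ) ∧ (b : ℕ) < n - 1) ∨
       ((b : ℕ) < n - 4 ∧ n - 4 ≤ (a : ℕ) ∧ (a : ℕ) < n - 1) ∨
       (n - 4 ≤ (a : ℕ) ∧ (a : ℕ) < n - 1 ∧ (b : ℕ) = n - 1) ∨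
       (n - 4 ≤ (b : ℕ) ∧ (b : ℕ) < n - 1 ∧ (a : ℕ) = n - 1))) :
    ∀ i : Fin n, (i : ℕ) < n - 1 → 0 < lev G i := by
  obtain rfl : G = leverageExample n := by
    ext a b
    rw [hG, leverageExample, fromRel_adj]
    omega
  intro i hi
  rcases lt_or_ge (i : ℕ) (n - 4) with hclique | hmid
  · exact leverageExample.lev_pos_of_lt hclique
  · rw [leverageExample.lev_of_le_of_lt (by omega) hmid hi]
    have hn' : (11 : ℚ) ≤ n := by exact_mod_cast hn
    exact div_pos (by linarith) (mul_pos (by linarith) (by linarith))
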